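/- arXiv:2202.00129 — 2 statements merged into one kernel-verified Lean document; each statement's English description precedes it below -/
import Mathlib

section
/- For every convex function f : ℝ → ℝ on (0,∞) with f(1) = 0, every fixed c ≥ 0, and all 0 ≤ q ≤ q' ≤ 1, the f-inverse is monotone in its first argument: D_f^{-1}(q | c) ≤ D_f^{-1}(q' | c). -/
/-!
Admissible `p ≤ q'` are harmless, since `q'` itself is admissible at `q'`. Otherwise write
`q' = t q + (1 - t)` with `t = (1 - q') / (1 - q)` and put `p' = t p + (1 - t) ≥ p`. The pair
`(p', q')` is the mixture of `(p, q)` and `(1, 1)` with weights `t, 1 - t`, so joint convexity of the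
Bernoulli `f`-divergence and `D(1‖1) = 0` give `D(p'‖q') ≤ t D(p‖q) ≤ c`. Concretely, the `false`
atoms have the same likelihood ratio and the `true` atoms are handled by subadditivity of the
perspective `(p, q) ↦ q f (p / q)`; when `q = 0` its role is played by `p · derivAtTop f`, via
`f x ≤ derivAtTop f · (x - 1)` for `x > 1`.
-/

open Set Filter MeasureTheory ProbabilityTheory ENNReal NNReal
open scoped Classical

/-- Limit (limsup) of the slope `f x / x` at infinity, as an extended real number;
used for the contribution of the singular part in the `f`-divergence. -/
noncomputable def derivAtTop (f : ℝ → ℝ) : EReal :=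
  Filter.limsup (fun x => ((f x / x : ℝ) : EReal)) Filter.atTop

/-- The `f`-divergence between two measures. -/
noncomputable def fDiv {Ω : Type*} [MeasurableSpace Ω] (f : ℝ → ℝ) (μ ν : Measure Ω) : EReal :=
  if Integrable (fun x => f ((μ.rnDeriv ν x).toReal)) ν then
    ((∫ x, f ((μ.rnDeriv ν x).toReal) ∂ν : ℝ) : EReal)
      + derivAtTop f * ((μ.singularPart ν Set.univ : ℝ≥0∞) : EReal)
  else ⊤

/-- The Bernoulli measure on `Bool` with mean `p`. -/
noncomputable def bern (p : ℝ) : Measure Bool :=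
  ENNReal.ofReal p • Measure.dirac true + ENNReal.ofReal (1 - p) • Measure.dirac false

/-- The Bernoulli `f`-divergence `D_{f,B}(p‖q)`: the `f`-divergence of the
corresponding Bernoulli probability measures. -/
noncomputable def bernFDiv (f : ℝ → ℝ) (p q : ℝ) : EReal := fDiv f (bern p) (bern q)

/-- The `f`-inverse `D_f⁻¹(q | c) := sup { p ∈ [0,1] : D_{f,B}(p‖q) ≤ c }`. -/
noncomputable def fInv (f : ℝ → ℝ) (q : ℝ) (c : EReal) : ℝ :=
  sSup {p : ℝ | p ∈ Set.Icc (0:ℝ) 1 ∧ bernFDiv f p q ≤ c}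

open scoped Topology

section fDiv

variable {Ω : Type*} [MeasurableSpace Ω] {f : ℝ → ℝ}

lemma fDiv_eq_of_eq_add_withDensity {μ ν ξ : Measure Ω} [SigmaFinite ν] {g : Ω → ℝ≥0∞}
    (hg : Measurable g) (hξ : ξ ⟂ₘ ν) (hμ : μ = ξ + ν.withDensity g)
    (hint : Integrable (fun x => f (g x).toReal) ν) :
    fDiv f μ ν = ((∫ x, f (g x).toReal ∂ν : ℝ) : EReal) + derivAtTop f * (ξ univ : EReal) := by
  have hcong : (fun x => f ((μ.rnDeriv ν x).toReal)) =ᵐ[ν] fun x => f (g x).toReal :=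
    (Measure.eq_rnDeriv hg hξ hμ).mono fun x hx => by simp only [hx]
  rw [fDiv, if_pos ((integrable_congr hcong).2 hint), integral_congr_ae hcong,
    ← Measure.eq_singularPart hg hξ hμ]

lemma fDiv_self (hf1 : f 1 = 0) (μ : Measure Ω) [IsFiniteMeasure μ] : fDiv f μ μ = 0 := by
  rw [fDiv_eq_of_eq_add_withDensity measurable_one Measure.MutuallySingular.zero_left
    (by rw [withDensity_one, zero_add])] <;> simp [hf1]

end fDiv

instance (p : ℝ) : IsFiniteMeasure (bern p) :=
  ⟨by simp [bern, ENNReal.add_lt_top]⟩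

lemma integral_bern {p : ℝ} (hp0 : 0 ≤ p) (hp1 : p ≤ 1) (h : Bool → ℝ) :
    ∫ x, h x ∂(bern p) = p * h true + (1 - p) * h false := by
  rw [integral_fintype Integrable.of_finite]
  simp [bern, Measure.real, ENNReal.toReal_ofReal hp0, ENNReal.toReal_ofReal (sub_nonneg.2 hp1)]

lemma bern_zero : bern 0 = Measure.dirac false := by
  simp [bern]

lemma bern_eq_withDensity (p : ℝ) {q : ℝ} (hq0 : 0 < q) (hq1 : q < 1) :
    bern p = (bern q).withDensity
      (fun x => if x then ENNReal.ofReal (p / q) else ENNReal.ofReal ((1 - p) / (1 - q))) := by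
  have htrue : ENNReal.ofReal (p / q) * ENNReal.ofReal q = ENNReal.ofReal p := by
    rw [← ENNReal.ofReal_mul' hq0.le, div_mul_cancel₀ _ hq0.ne']
  have hfalse : ENNReal.ofReal ((1 - p) / (1 - q)) * ENNReal.ofReal (1 - q)
      = ENNReal.ofReal (1 - p) := by
    rw [← ENNReal.ofReal_mul' (sub_nonneg.2 hq1.le), div_mul_cancel₀ _ (sub_pos.2 hq1).ne']
  ext s hs
  rw [withDensity_apply _ hs, ← lintegral_indicator hs, lintegral_fintype]
  by_cases ht : true ∈ s <;> by_cases hf : false ∈ s <;>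
    simp [bern, ht, hf, htrue, hfalse]

section bernFDiv

variable {f : ℝ → ℝ}

lemma bernFDiv_self (hf1 : f 1 = 0) (q : ℝ) : bernFDiv f q q = 0 :=
  fDiv_self hf1 (bern q)

lemma bernFDiv_eq {p q : ℝ} (hp0 : 0 ≤ p) (hp1 : p ≤ 1) (hq0 : 0 < q) (hq1 : q < 1) :
    bernFDiv f p q = ((q * f (p / q) + (1 - q) * f ((1 - p) / (1 - q)) : ℝ) : EReal) := by
  rw [bernFDiv, fDiv_eq_of_eq_add_withDensity (measurable_of_countable _)
    Measure.MutuallySingular.zero_left (by rw [zero_add]; exact bern_eq_withDensity p hq0 hq1)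
    Integrable.of_finite, integral_bern hq0.le hq1.le]
  simp [ENNReal.toReal_ofReal (div_nonneg hp0 hq0.le),
    ENNReal.toReal_ofReal (div_nonneg (sub_nonneg.2 hp1) (sub_nonneg.2 hq1.le))]

lemma bernFDiv_zero_right {p : ℝ} (hp0 : 0 ≤ p) (hp1 : p ≤ 1) :
    bernFDiv f p 0 = ((f (1 - p) : ℝ) : EReal) + derivAtTop f * (p : EReal) := by
  have hsing : (ENNReal.ofReal p • Measure.dirac true) ⟂ₘ bern 0 :=
    ⟨{false}, trivial, by simp, by simp [bern_zero]⟩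
  rw [bernFDiv, fDiv_eq_of_eq_add_withDensity measurable_const hsing
    (by rw [bern_zero, withDensity_const, bern]) Integrable.of_finite]
  simp [bern_zero, ENNReal.toReal_ofReal (sub_nonneg.2 hp1), EReal.coe_ennreal_ofReal, hp0,
    Measure.real]

end bernFDiv

lemma ConvexOn.perspective_add_le {f : ℝ → ℝ} (hf : ConvexOn ℝ (Ioi 0) f) {p q p₂ q₂ : ℝ}
    (hp : 0 < p) (hq : 0 < q) (hp₂ : 0 < p₂) (hq₂ : 0 < q₂) :
    (q + q₂) * f ((p + p₂) / (q + q₂)) ≤ q * f (p / q) + q₂ * f (p₂ / q₂) := by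
  have hs : 0 < q + q₂ := add_pos hq hq₂
  have h := hf.2 (mem_Ioi.2 (div_pos hp hq)) (mem_Ioi.2 (div_pos hp₂ hq₂))
    (div_nonneg hq.le hs.le) (div_nonneg hq₂.le hs.le) (by field_simp)
  have harg : q / (q + q₂) * (p / q) + q₂ / (q + q₂) * (p₂ / q₂) = (p + p₂) / (q + q₂) := by
    field_simp
  simp only [smul_eq_mul, harg] at h
  calc (q + q₂) * f ((p + p₂) / (q + q₂))
      ≤ (q + q₂) * (q / (q + q₂) * f (p / q) + q₂ / (q + q₂) * f (p₂ / q₂)) :=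
        mul_le_mul_of_nonneg_left h hs.le
    _ = q * f (p / q) + q₂ * f (p₂ / q₂) := by field_simp

section derivAtTop

variable {f : ℝ → ℝ}

lemma slope_le_derivAtTop (hf : ConvexOn ℝ (Ioi 0) f) (hf1 : f 1 = 0) {x : ℝ} (hx : 1 < x) :
    ((f x / (x - 1) : ℝ) : EReal) ≤ derivAtTop f := by
  set s := f x / (x - 1)
  have hlow : ∀ t, x ≤ t → s - s / t ≤ f t / t := fun t ht => by
    have ht0 : 0 < t := by linarith
    have hslope : s ≤ f t / (t - 1) := by
      simpa [hf1] using hf.secant_mono (a := 1) (by simp) (mem_Ioi.2 (by linarith))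
        (mem_Ioi.2 ht0) hx.ne' (by linarith) ht
    rw [le_div_iff₀ ht0]
    calc (s - s / t) * t = s * (t - 1) := by field_simp
      _ ≤ f t := (le_div_iff₀ (by linarith)).1 hslope
  have htend : Tendsto (fun t : ℝ => ((s - s / t : ℝ) : EReal)) atTop (𝓝 (s : EReal)) := by
    have : Tendsto (fun t : ℝ => s - s / t) atTop (𝓝 s) := by
      simpa using tendsto_const_nhds.sub (tendsto_const_nhds.div_atTop (tendsto_id (α := ℝ)))
    exact (continuous_coe_real_ereal.tendsto s).comp this
  calc (s : EReal) = limsup (fun t : ℝ => ((s - s / t : ℝ) : EReal)) atTop := htend.limsup_eq.symm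
    _ ≤ derivAtTop f := limsup_le_limsup ((eventually_ge_atTop x).mono fun t ht =>
        EReal.coe_le_coe_iff.2 (hlow t ht))

lemma derivAtTop_ne_bot (hf : ConvexOn ℝ (Ioi 0) f) (hf1 : f 1 = 0) : derivAtTop f ≠ ⊥ :=
  ne_bot_of_le_ne_bot (EReal.coe_ne_bot _) (slope_le_derivAtTop hf hf1 one_lt_two)

lemma le_mul_sub_one_of_derivAtTop_eq (hf : ConvexOn ℝ (Ioi 0) f) (hf1 : f 1 = 0) {r : ℝ}
    (hr : derivAtTop f = r) {x : ℝ} (hx : 1 < x) : f x ≤ r * (x - 1) := by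
  have h := slope_le_derivAtTop hf hf1 hx
  rw [hr, EReal.coe_le_coe_iff, div_le_iff₀ (by linarith)] at h
  exact h

end derivAtTop

lemma bernFDiv_convexComb_one_le {f : ℝ → ℝ} (hf : ConvexOn ℝ (Ioi 0) f) (hf1 : f 1 = 0)
    {p q t : ℝ} (hp0 : 0 < p) (hp1 : p ≤ 1) (hq0 : 0 ≤ q) (hq1 : q < 1) (ht0 : 0 < t)
    (ht1 : t < 1) :
    bernFDiv f (t * p + (1 - t)) (t * q + (1 - t)) ≤ t * bernFDiv f p q := by
  have hq'0 : 0 < t * q + (1 - t) := by nlinarith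
  have hq'1 : t * q + (1 - t) < 1 := by nlinarith
  have h1q' : 1 - (t * q + (1 - t)) = t * (1 - q) := by ring
  have hratio : (1 - (t * p + (1 - t))) / (1 - (t * q + (1 - t))) = (1 - p) / (1 - q) := by
    rw [h1q', show 1 - (t * p + (1 - t)) = t * (1 - p) by ring,
      mul_div_mul_left _ _ ht0.ne']
  rw [bernFDiv_eq (by nlinarith) (by nlinarith) hq'0 hq'1, hratio, h1q']
  rcases hq0.eq_or_lt with rfl | hq0
  · rw [bernFDiv_zero_right hp0.le hp1]
    simp only [mul_zero, zero_add, sub_zero, div_one, mul_one] at hq'0 ⊢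
    induction h : derivAtTop f using EReal.rec with
    | bot => exact absurd h (derivAtTop_ne_bot hf hf1)
    | top =>
      rw [EReal.top_mul_of_pos (EReal.coe_pos.2 hp0), EReal.coe_add_top,
        EReal.coe_mul_top_of_pos ht0]
      exact le_top
    | coe r =>
      have hx : 1 < (t * p + (1 - t)) / (1 - t) := by
        rw [one_lt_div hq'0]; nlinarith
      have hfx := le_mul_sub_one_of_derivAtTop_eq hf hf1 h hx
      have htrue : (1 - t) * f ((t * p + (1 - t)) / (1 - t)) ≤ t * (r * p) :=
        calc _ ≤ (1 - t) * (r * ((t * p + (1 - t)) / (1 - t) - 1)) :=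
              mul_le_mul_of_nonneg_left hfx hq'0.le
          _ = t * (r * p) := by field_simp; ring
      rw [← EReal.coe_mul, ← EReal.coe_add, ← EReal.coe_mul, EReal.coe_le_coe_iff]
      linarith
  · rw [bernFDiv_eq hp0.le hp1 hq0 hq1, ← EReal.coe_mul, EReal.coe_le_coe_iff]
    have h := hf.perspective_add_le (mul_pos ht0 hp0) (mul_pos ht0 hq0) (sub_pos.2 ht1)
      (sub_pos.2 ht1)
    rw [mul_div_mul_left _ _ ht0.ne', div_self (sub_pos.2 ht1).ne', hf1] at h
    nlinarith

lemma le_fInv {f : ℝ → ℝ} {p q : ℝ} {c : EReal} (hp : p ∈ Icc (0 : ℝ) 1)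
    (hpq : bernFDiv f p q ≤ c) : p ≤ fInv f q c :=
  le_csSup ⟨1, fun _ hx => hx.1.2⟩ ⟨hp, hpq⟩

lemma fInv_le {f : ℝ → ℝ} {q a : ℝ} {c : EReal}
    (h : ∀ p ∈ Icc (0 : ℝ) 1, bernFDiv f p q ≤ c → p ≤ a) (ha : 0 ≤ a) : fInv f q c ≤ a :=
  Real.sSup_le (fun p hp => h p hp.1 hp.2) ha

/-- **Monotonicity of the `f`-inverse in its first argument.**
For every convex `f` on `(0, ∞)` with `f 1 = 0`, every `c ≥ 0` and all `0 ≤ q ≤ q' ≤ 1`,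
`D_f⁻¹(q | c) ≤ D_f⁻¹(q' | c)`. -/
theorem fInv_mono_in_q (f : ℝ → ℝ) (hf : ConvexOn ℝ (Set.Ioi (0:ℝ)) f) (hf1 : f 1 = 0)
    (c : ℝ) (hc : 0 ≤ c) (q q' : ℝ) (hq0 : 0 ≤ q) (hqq' : q ≤ q') (hq'1 : q' ≤ 1) :
    fInv f q ((c : ℝ) : EReal) ≤ fInv f q' ((c : ℝ) : EReal) := by
  rcases hqq'.eq_or_lt with rfl | hlt
  · exact le_rfl
  have hq' : q' ≤ fInv f q' c :=
    le_fInv ⟨hq0.trans hqq', hq'1⟩ (by rw [bernFDiv_self hf1]; exact_mod_cast hc)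
  refine fInv_le (fun p ⟨hp0, hp1⟩ hpc => ?_) ((hq0.trans hqq').trans hq')
  rcases le_or_gt p q' with hpq' | hpq'
  · exact hpq'.trans hq'
  have h1q : 0 < 1 - q := by linarith
  obtain ⟨t, ht0, ht1, rfl⟩ : ∃ t, 0 < t ∧ t < 1 ∧ q' = t * q + (1 - t) :=
    ⟨(1 - q') / (1 - q), div_pos (by linarith) h1q, (div_lt_one h1q).2 (by linarith),
      by field_simp; ring⟩
  have hp'c : bernFDiv f (t * p + (1 - t)) (t * q + (1 - t)) ≤ c :=
    calc _ ≤ t * bernFDiv f p q :=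
          bernFDiv_convexComb_one_le hf hf1 (by linarith) hp1 hq0 (by linarith) ht0 ht1
      _ ≤ t * c := mul_le_mul_of_nonneg_left hpc (EReal.coe_nonneg.2 ht0.le)
      _ ≤ c := by rw [← EReal.coe_mul, EReal.coe_le_coe_iff]; nlinarith
  calc p ≤ t * p + (1 - t) := by nlinarith
    _ ≤ fInv f (t * q + (1 - t)) c := le_fInv ⟨by nlinarith, by nlinarith⟩ hp'c
end

section
/- In the finite-horizon POMDP setting, fix t ∈ {0,…,T−1}, an open-loop action prefix a_{0:t−1}, and a state-independent probability measure q on O. Define R̃_{t→T} as the reward-to-go in which the observation o_t is drawn from q (independently of s_t) while all subsequent observations o_k for k > t are drawn from σ_k(s_k). Then sup over measurable policies π_t^t, …, π_t^{T−1} of R̃_{t→T} equals R^{⊥⋆}_{t→T}; in particular this supremum does not depend on q. -/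
open Set Filter MeasureTheory ProbabilityTheory ENNReal NNReal
open scoped Classical

/-- The distribution `p_t(·|a_{0:t−1})` of the state at time `t` obtained by propagating the
initial distribution `p0` through the transition kernels using the open-loop action
prefix `a_{0:t−1}`. -/
noncomputable def stateDist {S A : Type*} [MeasurableSpace S] [MeasurableSpace A]
    (p0 : Measure S) (P : ℕ → Kernel (S × A) S) :
    (t : ℕ) → (Fin t → A) → Measure S
  | 0, _ => p0
  | (t+1), a =>
      (stateDist p0 P t (fun i => a i.castSucc)).bind (fun s => P (t+1) (s, a (Fin.last t)))

/-- Expected reward-to-go of a history-dependent policy `π`, starting from state `s` at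
(absolute) time `k`, with `n` steps remaining and with `hist : Fin m → O` the observations
collected so far (since the starting time of the policy).  At each step an observation `o`
is drawn from the sensor `σ k`, the action `π m (hist.snoc o)` is applied (a measurable
function of all observations received so far), the reward `r k` is collected, and the state
evolves through the transition kernel `P (k+1)`. -/
noncomputable def valAux {S O A : Type*}
    [MeasurableSpace S] [MeasurableSpace O] [MeasurableSpace A]
    (P : ℕ → Kernel (S × A) S) (σ : ℕ → Kernel S O) (r : ℕ → S → A → ℝ)
    (π : (k : ℕ) → (Fin (k + 1) → O) → A) :
    (n : ℕ) → (k : ℕ) → (m : ℕ) → (Fin m → O) → S → ℝ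
  | 0, _, _, _, _ => 0
  | (n+1), k, m, hist, s =>
      ∫ o, (r k s (π m (Fin.snoc hist o)) +
          ∫ s', valAux P σ r π n (k+1) (m+1) (Fin.snoc hist o) s'
            ∂(P (k+1) (s, π m (Fin.snoc hist o)))) ∂(σ k s)

/-- The reward-to-go `R_{t→T}`: the total expected reward over times `t, …, T−1` when the
state at time `t` is distributed according to `p_t(·|a_{0:t−1})` (obtained from the open-loop
prefix `a_{0:t−1}`) and the policies `π_t^t, …, π_t^{T−1}` (encoded as `π k` acting on the
observations `o_{t:t+k}`) are applied from time `t` onwards. -/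
noncomputable def rewardToGo {S O A : Type*}
    [MeasurableSpace S] [MeasurableSpace O] [MeasurableSpace A]
    (p0 : Measure S) (P : ℕ → Kernel (S × A) S) (σ : ℕ → Kernel S O) (r : ℕ → S → A → ℝ)
    (T t : ℕ) (a : Fin t → A) (π : (k : ℕ) → (Fin (k + 1) → O) → A) : ℝ :=
  ∫ s, valAux P σ r π (T - t) t 0 Fin.elim0 s ∂(stateDist p0 P t a)

/-- The modified reward-to-go `R̃_{t→T}` in which the first observation `o_t` is drawn from a
state-independent probability measure `q` on `O` (all subsequent observations `o_k`, `k > t`,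
are drawn from the sensors `σ k`). -/
noncomputable def rewardToGoTilde {S O A : Type*}
    [MeasurableSpace S] [MeasurableSpace O] [MeasurableSpace A]
    (p0 : Measure S) (P : ℕ → Kernel (S × A) S) (σ : ℕ → Kernel S O) (r : ℕ → S → A → ℝ)
    (q : Measure O) (T t : ℕ) (a : Fin t → A)
    (π : (k : ℕ) → (Fin (k + 1) → O) → A) : ℝ :=
  ∫ s, (∫ o, (r t s (π 0 (fun _ => o)) +
      ∫ s', valAux P σ r π (T - t - 1) (t+1) 1 (fun _ => o) s'
        ∂(P (t+1) (s, π 0 (fun _ => o)))) ∂q) ∂(stateDist p0 P t a)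

/-!
Integrate over the state before the first observation (Fubini). Once the first observation `o` is
fixed, the action `π 0 o` taken at time `t` is a constant and the rest of the policy is `π` shifted
by `o`, so `R̃_{t→T}(π)` is the `q`-average over `o` of `rewardToGoOpenLoop (π 0 o) (π.shift o)`,
each of which is at most `R^{⊥⋆}_{t→T}`. Conversely, `rewardToGoOpenLoop a' π'` is the value of
`R̃_{t→T}` at the policy that plays `a'` at time `t` and then follows `π'`, ignoring `o_t`.
-/

theorem integral_mem_Icc_of_forall_mem_Icc {α : Type*} [MeasurableSpace α] {μ : Measure α}
    [IsProbabilityMeasure μ] {f : α → ℝ} {b : ℝ} (hf : ∀ x, f x ∈ Icc 0 b) :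
    ∫ x, f x ∂μ ∈ Icc 0 b := by
  refine ⟨integral_nonneg fun x => (hf x).1, ?_⟩
  calc ∫ x, f x ∂μ ≤ ∫ _, b ∂μ :=
        integral_mono_of_nonneg (ae_of_all _ fun x => (hf x).1) (integrable_const b)
          (ae_of_all _ fun x => (hf x).2)
    _ = b := by simp

theorem integrable_of_forall_mem_Icc {α : Type*} [MeasurableSpace α] {μ : Measure α}
    [IsFiniteMeasure μ] {f : α → ℝ} {b : ℝ} (hfm : AEStronglyMeasurable f μ)
    (hf : ∀ x, f x ∈ Icc 0 b) : Integrable f μ :=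
  .of_bound hfm b (ae_of_all _ fun x => by rw [Real.norm_of_nonneg (hf x).1]; exact (hf x).2)

theorem MeasureTheory.StronglyMeasurable.integral_kernel_comp_right {X Y Z E : Type*}
    [MeasurableSpace X] [MeasurableSpace Y] [MeasurableSpace Z]
    [NormedAddCommGroup E] [NormedSpace ℝ E] {f : X × Z → E} (hf : StronglyMeasurable f)
    (κ : Kernel Y Z) [IsSFiniteKernel κ] {g : X → Y} (hg : Measurable g) :
    StronglyMeasurable fun x => ∫ z, f (x, z) ∂κ (g x) :=
  hf.integral_kernel_prod_right' (κ := κ.comap g hg)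

theorem MeasureTheory.Measure.integral_kernel_comp {α β E : Type*} [MeasurableSpace α]
    [MeasurableSpace β] [NormedAddCommGroup E] [NormedSpace ℝ E] {μ : Measure α} [SFinite μ]
    {κ : Kernel α β} [IsSFiniteKernel κ] {f : β → E} (hf : Integrable f (κ ∘ₘ μ)) :
    ∫ y, f y ∂(κ ∘ₘ μ) = ∫ x, ∫ y, f y ∂κ x ∂μ := by
  rw [← Measure.snd_compProd, Measure.snd, integral_map measurable_snd.aemeasurable]
  · exact Measure.integral_compProd ((Measure.integrable_compProd_snd_iff hf.1).2 hf)
  · rw [← Measure.snd, Measure.snd_compProd]; exact hf.1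

theorem measurable_fin_snoc {O : Type*} [MeasurableSpace O] {m : ℕ} :
    Measurable fun p : (Fin m → O) × O => (Fin.snoc p.1 p.2 : Fin (m + 1) → O) := by
  refine measurable_pi_lambda _ fun i => ?_
  cases i using Fin.lastCases with
  | last => simpa only [Fin.snoc_last] using measurable_snd
  | cast j => simp only [Fin.snoc_castSucc]; fun_prop

theorem measurable_fin_cons {O : Type*} [MeasurableSpace O] {m : ℕ} (o : O) :
    Measurable fun h : Fin m → O => (Fin.cons o h : Fin (m + 1) → O) := by
  refine measurable_pi_lambda _ fun i => ?_
  cases i using Fin.cases with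
  | zero => simpa only [Fin.cons_zero] using measurable_const
  | succ j => simpa only [Fin.cons_succ] using measurable_pi_apply j

abbrev Policy (O A : Type*) := (k : ℕ) → (Fin (k + 1) → O) → A

namespace Policy

variable {O A : Type*}

def shift (π : Policy O A) (o : O) : Policy O A := fun k h => π (k + 1) (Fin.cons o h)

def cons (a' : A) (π : Policy O A) : Policy O A
  | 0 => fun _ => a'
  | k + 1 => fun h => π k (Fin.tail h)

theorem measurable_shift [MeasurableSpace O] [MeasurableSpace A] {π : Policy O A}
    (hπ : ∀ k, Measurable (π k)) (o : O) (k : ℕ) : Measurable (π.shift o k) :=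
  (hπ (k + 1)).comp (measurable_fin_cons o)

theorem measurable_cons [MeasurableSpace O] [MeasurableSpace A] (a' : A) {π : Policy O A}
    (hπ : ∀ k, Measurable (π k)) : ∀ k, Measurable (cons a' π k)
  | 0 => measurable_const
  | k + 1 => (hπ k).comp (measurable_pi_lambda _ fun i => measurable_pi_apply i.succ)

@[simp]
theorem shift_cons (a' : A) (π : Policy O A) (o : O) : (cons a' π).shift o = π := by
  funext k h
  simp [shift, cons, Fin.tail_cons]

end Policy

section POMDP

variable {S O A : Type*} [MeasurableSpace S] [MeasurableSpace O] [MeasurableSpace A]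
  {P : ℕ → Kernel (S × A) S} {σ : ℕ → Kernel S O} {r : ℕ → S → A → ℝ}

theorem valAux_mem_Icc [∀ k, IsMarkovKernel (P k)] [∀ k, IsMarkovKernel (σ k)]
    (hr01 : ∀ k s a', r k s a' ∈ Icc (0 : ℝ) 1) (π : Policy O A) (n k m : ℕ)
    (hist : Fin m → O) (s : S) : valAux P σ r π n k m hist s ∈ Icc (0 : ℝ) n := by
  induction n generalizing k m hist s with
  | zero => simp [valAux]
  | succ n ih =>
    rw [valAux, Nat.cast_succ, add_comm]
    refine integral_mem_Icc_of_forall_mem_Icc fun o => ?_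
    have hr := hr01 k s (π m (Fin.snoc hist o))
    have hnext := integral_mem_Icc_of_forall_mem_Icc (μ := P (k + 1) (s, π m (Fin.snoc hist o)))
      fun s' => ih (k + 1) (m + 1) (Fin.snoc hist o) s'
    exact ⟨add_nonneg hr.1 hnext.1, add_le_add hr.2 hnext.2⟩

theorem stronglyMeasurable_valAux [∀ k, IsSFiniteKernel (P k)] [∀ k, IsSFiniteKernel (σ k)]
    (hr : ∀ k, Measurable (Function.uncurry (r k))) {π : Policy O A}
    (hπ : ∀ k, Measurable (π k)) (n k m : ℕ) :
    StronglyMeasurable fun p : (Fin m → O) × S => valAux P σ r π n k m p.1 p.2 := by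
  induction n generalizing k m with
  | zero => exact stronglyMeasurable_const
  | succ n ih =>
    have hsnoc : Measurable fun x : ((Fin m → O) × S) × O =>
        (Fin.snoc x.1.1 x.2 : Fin (m + 1) → O) :=
      measurable_fin_snoc.comp (measurable_fst.fst.prodMk measurable_snd)
    have hact : Measurable fun x : ((Fin m → O) × S) × O => (x.1.2, π m (Fin.snoc x.1.1 x.2)) :=
      measurable_fst.snd.prodMk ((hπ m).comp hsnoc)
    have hreward := ((hr k).comp hact).stronglyMeasurable
    have hnext := ((ih (k + 1) (m + 1)).comp_measurable
      ((hsnoc.comp measurable_fst).prodMk measurable_snd)).integral_kernel_comp_right (P (k + 1))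
      hact
    exact (hreward.add hnext).integral_kernel_comp_right (σ k) measurable_snd

theorem valAux_cons (π : Policy O A) (o : O) (n k m : ℕ) (hist : Fin m → O) (s : S) :
    valAux P σ r π n k (m + 1) (Fin.cons o hist) s = valAux P σ r (π.shift o) n k m hist s := by
  induction n generalizing k m hist s with
  | zero => rfl
  | succ n ih =>
    simp only [valAux, ← Fin.cons_snoc_eq_snoc_cons, ih]
    rfl

theorem stateDist_succ_snoc (p0 : Measure S) (P : ℕ → Kernel (S × A) S) (t : ℕ) (a : Fin t → A)
    (a' : A) :
    stateDist p0 P (t + 1) (Fin.snoc a a')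
      = (P (t + 1)).comap (·, a') (by fun_prop) ∘ₘ stateDist p0 P t a := by
  simp only [stateDist, Fin.snoc_castSucc, Fin.snoc_last]
  rfl

instance isProbabilityMeasure_stateDist (p0 : Measure S) [IsProbabilityMeasure p0]
    (P : ℕ → Kernel (S × A) S) [∀ k, IsMarkovKernel (P k)] (t : ℕ) (a : Fin t → A) :
    IsProbabilityMeasure (stateDist p0 P t a) := by
  induction t with
  | zero => assumption
  | succ t ih =>
    have := ih (fun i => a i.castSucc)
    exact inferInstanceAs <| IsProbabilityMeasure <|
      (P (t + 1)).comap (·, a (Fin.last t)) (by fun_prop) ∘ₘ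
        stateDist p0 P t (fun i => a i.castSucc)

theorem rewardToGo_mem_Icc (p0 : Measure S) [IsProbabilityMeasure p0]
    [∀ k, IsMarkovKernel (P k)] [∀ k, IsMarkovKernel (σ k)]
    (hr01 : ∀ k s a', r k s a' ∈ Icc (0 : ℝ) 1) (T t : ℕ) (a : Fin t → A) (π : Policy O A) :
    rewardToGo p0 P σ r T t a π ∈ Icc (0 : ℝ) (T - t : ℕ) :=
  integral_mem_Icc_of_forall_mem_Icc fun s => valAux_mem_Icc hr01 π _ _ _ _ s

/-- The term inside the supremum defining `R^⊥_{t→T}`: play `a'` at time `t`, then follow `π`. -/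
noncomputable def rewardToGoOpenLoop (p0 : Measure S) (P : ℕ → Kernel (S × A) S)
    (σ : ℕ → Kernel S O) (r : ℕ → S → A → ℝ) (T t : ℕ) (a : Fin t → A) (a' : A)
    (π : Policy O A) : ℝ :=
  (∫ s, r t s a' ∂(stateDist p0 P t a)) + rewardToGo p0 P σ r T (t + 1) (Fin.snoc a a') π

theorem rewardToGoOpenLoop_mem_Icc (p0 : Measure S) [IsProbabilityMeasure p0]
    [∀ k, IsMarkovKernel (P k)] [∀ k, IsMarkovKernel (σ k)]
    (hr01 : ∀ k s a', r k s a' ∈ Icc (0 : ℝ) 1) (T t : ℕ) (a : Fin t → A) (a' : A)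
    (π : Policy O A) :
    rewardToGoOpenLoop p0 P σ r T t a a' π ∈ Icc (0 : ℝ) (1 + (T - (t + 1) : ℕ)) :=
  have hreward := integral_mem_Icc_of_forall_mem_Icc (μ := stateDist p0 P t a)
    fun s => hr01 t s a'
  have hrest := rewardToGo_mem_Icc p0 hr01 T (t + 1) (Fin.snoc a a') π
  ⟨add_nonneg hreward.1 hrest.1, add_le_add hreward.2 hrest.2⟩

theorem rewardToGoOpenLoop_eq_integral (p0 : Measure S) [IsProbabilityMeasure p0]
    [∀ k, IsMarkovKernel (P k)] [∀ k, IsMarkovKernel (σ k)]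
    (hr : ∀ k, Measurable (Function.uncurry (r k))) (hr01 : ∀ k s a', r k s a' ∈ Icc (0 : ℝ) 1)
    {π : Policy O A} (hπ : ∀ k, Measurable (π k)) (T t : ℕ) (a : Fin t → A) (a' : A) :
    rewardToGoOpenLoop p0 P σ r T t a a' π
      = ∫ s, (r t s a' + ∫ s', valAux P σ r π (T - (t + 1)) (t + 1) 0 Fin.elim0 s'
          ∂(P (t + 1) (s, a'))) ∂(stateDist p0 P t a) := by
  have hV : StronglyMeasurable fun s' => valAux P σ r π (T - (t + 1)) (t + 1) 0 Fin.elim0 s' :=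
    (stronglyMeasurable_valAux hr hπ _ _ 0).comp_measurable
      (measurable_const.prodMk measurable_id)
  have hV_mem := valAux_mem_Icc (P := P) (σ := σ) hr01 π (T - (t + 1)) (t + 1) 0 Fin.elim0
  have hreward : Integrable (fun s => r t s a') (stateDist p0 P t a) :=
    integrable_of_forall_mem_Icc
      ((hr t).comp (measurable_id.prodMk measurable_const)).aestronglyMeasurable
      fun s => hr01 t s a'
  have hnext : Integrable (fun s => ∫ s', valAux P σ r π (T - (t + 1)) (t + 1) 0 Fin.elim0 s'
      ∂(P (t + 1) (s, a'))) (stateDist p0 P t a) :=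
    integrable_of_forall_mem_Icc ((hV.comp_measurable measurable_snd).integral_kernel_comp_right
      (P (t + 1)) (measurable_id.prodMk measurable_const)).aestronglyMeasurable
      fun s => integral_mem_Icc_of_forall_mem_Icc hV_mem
  rw [integral_add hreward hnext, rewardToGoOpenLoop, rewardToGo, stateDist_succ_snoc,
    Measure.integral_kernel_comp (integrable_of_forall_mem_Icc hV.aestronglyMeasurable hV_mem)]
  rfl

theorem rewardToGoTilde_eq_integral_rewardToGoOpenLoop (p0 : Measure S)
    [IsProbabilityMeasure p0] [∀ k, IsMarkovKernel (P k)] [∀ k, IsMarkovKernel (σ k)]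
    (hr : ∀ k, Measurable (Function.uncurry (r k))) (hr01 : ∀ k s a', r k s a' ∈ Icc (0 : ℝ) 1)
    (q : Measure O) [IsProbabilityMeasure q] (T t : ℕ) (a : Fin t → A) {π : Policy O A}
    (hπ : ∀ k, Measurable (π k)) :
    rewardToGoTilde p0 P σ r q T t a π
      = ∫ o, rewardToGoOpenLoop p0 P σ r T t a (π 0 fun _ => o) (π.shift o) ∂q := by
  let H : S × O → ℝ := fun p => r t p.1 (π 0 fun _ => p.2) +
    ∫ s', valAux P σ r π (T - t - 1) (t + 1) 1 (fun _ => p.2) s'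
      ∂(P (t + 1) (p.1, π 0 fun _ => p.2))
  have hobs : Measurable fun o : O => (fun _ : Fin 1 => o) :=
    measurable_pi_lambda _ fun _ => measurable_id
  have hact : Measurable fun p : S × O => (p.1, π 0 fun _ => p.2) :=
    measurable_fst.prodMk ((hπ 0).comp (hobs.comp measurable_snd))
  have hH_meas : StronglyMeasurable H :=
    ((hr t).comp hact).stronglyMeasurable.add <|
      ((stronglyMeasurable_valAux hr hπ (T - t - 1) (t + 1) 1).comp_measurable
        ((hobs.comp measurable_fst.snd).prodMk measurable_snd)).integral_kernel_comp_right
          (P (t + 1)) hact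
  have hH_mem (p : S × O) : H p ∈ Icc (0 : ℝ) (1 + (T - t - 1 : ℕ)) :=
    have hreward := hr01 t p.1 (π 0 fun _ => p.2)
    have hnext := integral_mem_Icc_of_forall_mem_Icc (μ := P (t + 1) (p.1, π 0 fun _ => p.2))
      (valAux_mem_Icc hr01 π (T - t - 1) (t + 1) 1 fun _ => p.2)
    ⟨add_nonneg hreward.1 hnext.1, add_le_add hreward.2 hnext.2⟩
  calc rewardToGoTilde p0 P σ r q T t a π = ∫ s, ∫ o, H (s, o) ∂q ∂(stateDist p0 P t a) := rfl
    _ = ∫ o, ∫ s, H (s, o) ∂(stateDist p0 P t a) ∂q :=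
      integral_integral_swap (integrable_of_forall_mem_Icc hH_meas.aestronglyMeasurable hH_mem)
    _ = _ := by
      refine integral_congr_ae (ae_of_all _ fun o => ?_)
      have hconst : (fun _ : Fin 1 => o) = Fin.cons o Fin.elim0 := by
        funext i; rw [Subsingleton.elim i 0, Fin.cons_zero]
      simp only [H, rewardToGoOpenLoop_eq_integral p0 hr hr01 (π.measurable_shift hπ o),
        Nat.sub_sub, hconst, valAux_cons]

theorem rewardToGoTilde_mem_Icc (p0 : Measure S) [IsProbabilityMeasure p0]
    [∀ k, IsMarkovKernel (P k)] [∀ k, IsMarkovKernel (σ k)]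
    (hr : ∀ k, Measurable (Function.uncurry (r k))) (hr01 : ∀ k s a', r k s a' ∈ Icc (0 : ℝ) 1)
    (q : Measure O) [IsProbabilityMeasure q] (T t : ℕ) (a : Fin t → A) {π : Policy O A}
    (hπ : ∀ k, Measurable (π k)) :
    rewardToGoTilde p0 P σ r q T t a π ∈ Icc (0 : ℝ) (1 + (T - (t + 1) : ℕ)) := by
  rw [rewardToGoTilde_eq_integral_rewardToGoOpenLoop p0 hr hr01 q T t a hπ]
  exact integral_mem_Icc_of_forall_mem_Icc fun o => rewardToGoOpenLoop_mem_Icc p0 hr01 T t a _ _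

theorem rewardToGoTilde_cons (p0 : Measure S) [IsProbabilityMeasure p0]
    [∀ k, IsMarkovKernel (P k)] [∀ k, IsMarkovKernel (σ k)]
    (hr : ∀ k, Measurable (Function.uncurry (r k))) (hr01 : ∀ k s a', r k s a' ∈ Icc (0 : ℝ) 1)
    (q : Measure O) [IsProbabilityMeasure q] (T t : ℕ) (a : Fin t → A) (a' : A)
    {π : Policy O A} (hπ : ∀ k, Measurable (π k)) :
    rewardToGoTilde p0 P σ r q T t a (Policy.cons a' π)
      = rewardToGoOpenLoop p0 P σ r T t a a' π := by
  rw [rewardToGoTilde_eq_integral_rewardToGoOpenLoop p0 hr hr01 q T t a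
    (Policy.measurable_cons a' hπ)]
  simp [Policy.cons]

end POMDP

theorem sup_rewardToGoTilde_eq_Rperpstar_general
    {S O A : Type*} [MeasurableSpace S] [MeasurableSpace O] [MeasurableSpace A]
    [Nonempty A]
    (T : ℕ)
    (p0 : Measure S) [IsProbabilityMeasure p0]
    (P : ℕ → Kernel (S × A) S) [∀ k, IsMarkovKernel (P k)]
    (σ : ℕ → Kernel S O) [∀ k, IsMarkovKernel (σ k)]
    (r : ℕ → S → A → ℝ) (hr : ∀ k, Measurable (Function.uncurry (r k)))
    (hr01 : ∀ k s a', r k s a' ∈ Set.Icc (0:ℝ) 1)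
    (t : ℕ) (a : Fin t → A)
    (q : Measure O) [IsProbabilityMeasure q] :
    sSup {R : ℝ | ∃ π : (k : ℕ) → (Fin (k + 1) → O) → A,
        (∀ k, Measurable (π k)) ∧ R = rewardToGoTilde p0 P σ r q T t a π}
      = sSup {x : ℝ | ∃ π' : (k : ℕ) → (Fin (k + 1) → O) → A,
          (∀ k, Measurable (π' k)) ∧
          x = ⨆ a' : A, ((∫ s, r t s a' ∂(stateDist p0 P t a)) +
              rewardToGo p0 P σ r T (t+1) (Fin.snoc a a') π')} := by
  change _ = sSup {x | ∃ π' : Policy O A, (∀ k, Measurable (π' k)) ∧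
    x = ⨆ a', rewardToGoOpenLoop p0 P σ r T t a a' π'}
  have hbound := rewardToGoOpenLoop_mem_Icc p0 (P := P) (σ := σ) hr01 T t a
  have hrange (π' : Policy O A) :
      BddAbove (range fun a' => rewardToGoOpenLoop p0 P σ r T t a a' π') :=
    ⟨_, by rintro _ ⟨a', rfl⟩; exact (hbound a' π').2⟩
  have hRHS : BddAbove {x | ∃ π' : Policy O A, (∀ k, Measurable (π' k)) ∧
      x = ⨆ a', rewardToGoOpenLoop p0 P σ r T t a a' π'} :=
    ⟨_, by rintro _ ⟨π', -, rfl⟩; exact ciSup_le fun a' => (hbound a' π').2⟩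
  have hLHS : BddAbove {R | ∃ π : Policy O A, (∀ k, Measurable (π k)) ∧
      R = rewardToGoTilde p0 P σ r q T t a π} :=
    ⟨_, by rintro _ ⟨π, hπ, rfl⟩; exact (rewardToGoTilde_mem_Icc p0 hr hr01 q T t a hπ).2⟩
  have hπ₀ : ∀ k, Measurable ((fun _ _ => Classical.arbitrary A : Policy O A) k) :=
    fun _ => measurable_const
  apply le_antisymm
  · refine csSup_le ⟨_, _, hπ₀, rfl⟩ ?_
    rintro _ ⟨π, hπ, rfl⟩
    rw [rewardToGoTilde_eq_integral_rewardToGoOpenLoop p0 hr hr01 q T t a hπ]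
    refine (integral_mem_Icc_of_forall_mem_Icc fun o => ⟨(hbound _ _).1, ?_⟩).2
    exact (le_ciSup (hrange _) _).trans (le_csSup hRHS ⟨_, Policy.measurable_shift hπ o, rfl⟩)
  · refine csSup_le ⟨_, _, hπ₀, rfl⟩ ?_
    rintro _ ⟨π', hπ', rfl⟩
    exact ciSup_le fun a' => le_csSup hLHS
      ⟨_, Policy.measurable_cons a' hπ', (rewardToGoTilde_cons p0 hr hr01 q T t a a' hπ').symm⟩

/-- **With a state-independent first observation, feedback at time `t` provides no
advantage:** the supremum of `R̃_{t→T}` over measurable policies equals `R^{⊥⋆}_{t→T}`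
(the supremum over measurable continuation policies of the best open-loop-at-time-`t`
reward); in particular, it does not depend on `q`. -/
theorem sup_rewardToGoTilde_eq_Rperpstar
    {S O A : Type*} [MeasurableSpace S] [MeasurableSpace O] [MeasurableSpace A]
    [Fintype A] [Nonempty A]
    (T : ℕ) (hT : 1 ≤ T)
    (p0 : Measure S) [IsProbabilityMeasure p0]
    (P : ℕ → Kernel (S × A) S) [∀ k, IsMarkovKernel (P k)]
    (σ : ℕ → Kernel S O) [∀ k, IsMarkovKernel (σ k)]
    (r : ℕ → S → A → ℝ) (hr : ∀ k, Measurable (Function.uncurry (r k)))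
    (hr01 : ∀ k s a', r k s a' ∈ Set.Icc (0:ℝ) 1)
    (t : ℕ) (ht : t < T) (a : Fin t → A)
    (q : Measure O) [IsProbabilityMeasure q] :
    sSup {R : ℝ | ∃ π : (k : ℕ) → (Fin (k + 1) → O) → A,
        (∀ k, Measurable (π k)) ∧ R = rewardToGoTilde p0 P σ r q T t a π}
      = sSup {x : ℝ | ∃ π' : (k : ℕ) → (Fin (k + 1) → O) → A,
          (∀ k, Measurable (π' k)) ∧
          x = ⨆ a' : A, ((∫ s, r t s a' ∂(stateDist p0 P t a)) +
              rewardToGo p0 P σ r T (t+1) (Fin.snoc a a') π')} :=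
  sup_rewardToGoTilde_eq_Rperpstar_general T p0 P σ r hr hr01 t a q
end
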